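/- Let ω₀ > 0, γ > 0, and let ω(k) := √(ω₀² + 4 sin²(πk)) be the nearest-neighbour dispersion relation on 𝕋 = ℝ/ℤ. Then the phonon velocity v(k) := ω'(k)/(2π) equals sin(2πk)/ω(k), and the kinetic-theory thermal conductivity κ(L) := γ^{−1} L^{−1} Σ_{k∈Λ_L*} v(k)² satisfies lim_{L→∞} κ(L) = γ^{−1} ∫₀¹ sin²(πx) / (ω₀² + 4 sin²(πx/2)) dx, which is the steady-state thermal conductivity of the self-consistent heat bath model. -/

import Mathlib

open Real Filter

/-- The discrete circle of `L` sites, represented by integers: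
`{−(L−1)/2, …, (L−1)/2}` for odd `L` and `{−L/2+1, …, L/2}` for even `L`.
The dual lattice `Λ_L*` is identified with `Λ_L` via `k ↦ k/L`. -/
noncomputable def Lambda (L : ℕ) : Finset ℤ := Finset.Ioc ((L : ℤ) / 2 - L) ((L : ℤ) / 2)

/-- The nearest-neighbour dispersion relation `ω(k) = √(ω₀² + 4 sin²(πk))`. -/
noncomputable def nnDispersion (ω₀ : ℝ) (k : ℝ) : ℝ :=
  Real.sqrt (ω₀ ^ 2 + 4 * Real.sin (π * k) ^ 2)

/-- The phonon velocity `v(k) = ω'(k)/(2π)`. -/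
noncomputable def phononVelocity (ω₀ : ℝ) (k : ℝ) : ℝ :=
  deriv (nnDispersion ω₀) k / (2 * π)

/-!
The dispersion relation `ω` is `1`-periodic and symmetric under `k ↦ 1 - k`, so `v = ω'/(2π)` is
`1`-periodic and antisymmetric about `1/2`, and `v²` is continuous, `1`-periodic and symmetric
about `1/2`. By periodicity the sum over `Λ_L*` is the left Riemann sum of `v²` on `[0, 1]`, which
converges to `∫₀¹ v²` by uniform continuity. The stated integrand is `v(x/2)²`, and the
substitution `x = 2k` followed by the symmetry about `1/2` turns `∫₀¹ v(x/2)² dx` into `∫₀¹ v²`.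
-/
open Finset in
theorem Function.Periodic.sum_range_comp_const_add {M : Type*} [AddCancelCommMonoid M]
    {g : ℤ → M} {n : ℕ} (hg : Function.Periodic g n) (m : ℤ) :
    ∑ i ∈ range n, g (m + i) = ∑ i ∈ range n, g i := by
  have shift : ∀ m : ℤ, ∑ i ∈ range n, g (m + 1 + i) = ∑ i ∈ range n, g (m + i) := by
    intro m
    have h := (sum_range_succ (fun i : ℕ => g (m + i)) n).symm.trans
      (sum_range_succ' (fun i : ℕ => g (m + i)) n)
    rw [hg m, Nat.cast_zero, add_zero] at h
    simpa only [Nat.cast_succ, add_assoc, add_comm (1 : ℤ)] using (add_right_cancel h).symm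
  induction m using Int.induction_on with
  | zero => simp
  | succ m ih => rw [shift, ih]
  | pred m ih => rw [← ih, ← shift, sub_add_cancel]

open Finset in
theorem sum_Lambda_eq_sum_range {M : Type*} [AddCancelCommMonoid M] {f : ℝ → M}
    (hf : Function.Periodic f 1) (L : ℕ) :
    ∑ p ∈ Lambda L, f ((p : ℝ) / L) = ∑ i ∈ range L, f ((i : ℝ) / L) := by
  have hg : Function.Periodic (fun p : ℤ => f ((p : ℝ) / L)) L := by
    intro p
    rcases eq_or_ne L 0 with rfl | hL
    · simp
    · simpa [add_div, div_self (Nat.cast_ne_zero.2 hL : (L : ℝ) ≠ 0)] using hf ((p : ℝ) / L)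
  rw [Lambda, Int.Ioc_eq_finset_map, sum_map, sub_sub_cancel, Int.toNat_natCast]
  simpa using hg.sum_range_comp_const_add ((L : ℤ) / 2 - L + 1)

section

open Finset Set intervalIntegral
open MeasureTheory (volume)

variable {E : Type*} [NormedAddCommGroup E] [NormedSpace ℝ E]

theorem norm_riemannSum_sub_integral_le [CompleteSpace E] {f : ℝ → E}
    (hf : ContinuousOn f (Icc 0 1)) {n : ℕ} (hn : 0 < n) {ε : ℝ}
    (hε : ∀ x ∈ Icc (0 : ℝ) 1, ∀ y ∈ Icc (0 : ℝ) 1, dist x y ≤ 1 / n → dist (f x) (f y) ≤ ε) :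
    ‖(n : ℝ)⁻¹ • ∑ i ∈ range n, f (i / n) - ∫ x in (0 : ℝ)..1, f x‖ ≤ ε := by
  have hn₀ : (0 : ℝ) < n := Nat.cast_pos.2 hn
  have hstep : ∀ i : ℕ, ((i + 1) / n : ℝ) - i / n = 1 / n := fun i => by ring
  have hcell : ∀ i ∈ range n, Icc (i / n : ℝ) ((i + 1) / n) ⊆ Icc 0 1 := by
    intro i hi
    have : (i + 1 : ℝ) ≤ n := by exact_mod_cast mem_range.1 hi
    exact Icc_subset_Icc (by positivity) ((div_le_one hn₀).2 this)
  have hle : ∀ i : ℕ, (i / n : ℝ) ≤ (i + 1) / n := fun i => by gcongr; linarith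
  have hint : ∀ i ∈ range n, IntervalIntegrable f volume (i / n) ((i + 1) / n) :=
    fun i hi => (hf.mono (by rw [uIcc_of_le (hle i)]; exact hcell i hi)).intervalIntegrable
  have hsplit : ∫ x in (0 : ℝ)..1, f x = ∑ i ∈ range n, ∫ x in (i / n : ℝ)..((i + 1) / n), f x := by
    have h := sum_integral_adjacent_intervals (a := fun i : ℕ => (i / n : ℝ)) (μ := volume)
      fun i hi => by simpa using hint i (mem_range.2 hi)
    simpa [div_self hn₀.ne'] using h.symm
  have hsample : ∀ i : ℕ, (n : ℝ)⁻¹ • f (i / n) = ∫ _ in (i / n : ℝ)..((i + 1) / n), f (i / n) := by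
    intro i
    rw [integral_const, hstep, one_div]
  have hlocal : ∀ i ∈ range n, ‖∫ x in (i / n : ℝ)..((i + 1) / n), (f (i / n) - f x)‖ ≤ ε / n := by
    intro i hi
    refine (norm_integral_le_of_norm_le_const (C := ε) fun x hx => ?_).trans_eq ?_
    · rw [uIoc_of_le (hle i)] at hx
      have hx' : x ∈ Icc (i / n : ℝ) ((i + 1) / n) := Ioc_subset_Icc_self hx
      rw [← dist_eq_norm]
      refine hε _ (hcell i hi (left_mem_Icc.2 (hle i))) _ (hcell i hi hx') ?_
      rw [Real.dist_eq, abs_sub_comm, abs_of_nonneg (by linarith [hx'.1]), ← hstep i]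
      linarith [hx'.2]
    · rw [hstep, abs_of_pos (by positivity), mul_one_div]
  calc ‖(n : ℝ)⁻¹ • ∑ i ∈ range n, f (i / n) - ∫ x in (0 : ℝ)..1, f x‖
      = ‖∑ i ∈ range n, ∫ x in (i / n : ℝ)..((i + 1) / n), (f (i / n) - f x)‖ := by
        rw [hsplit, smul_sum, ← sum_sub_distrib]
        congr 1
        refine sum_congr rfl fun i hi => ?_
        rw [hsample, integral_sub intervalIntegrable_const (hint i hi)]
    _ ≤ ∑ i ∈ range n, ε / n := norm_sum_le_of_le _ hlocal
    _ = ε := by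
        rw [sum_const, card_range, nsmul_eq_mul]
        field_simp

theorem tendsto_riemannSum_integral [CompleteSpace E] {f : ℝ → E}
    (hf : ContinuousOn f (Icc 0 1)) :
    Tendsto (fun n : ℕ => (n : ℝ)⁻¹ • ∑ i ∈ range n, f (i / n)) atTop
      (nhds (∫ x in (0 : ℝ)..1, f x)) := by
  rw [Metric.tendsto_atTop]
  intro ε hε
  obtain ⟨δ, hδ, hfδ⟩ := Metric.uniformContinuousOn_iff_le.1
    (isCompact_Icc.uniformContinuousOn_of_continuous hf) (ε / 2) (half_pos hε)
  obtain ⟨N, hN⟩ := exists_nat_one_div_lt hδ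
  refine ⟨N + 1, fun n hn => ?_⟩
  have hn₀ : 0 < n := by omega
  have hmesh : (1 : ℝ) / n ≤ δ := by
    refine le_trans ?_ hN.le
    gcongr
    exact_mod_cast hn
  rw [dist_eq_norm]
  exact (norm_riemannSum_sub_integral_le hf hn₀ fun x hx y hy hxy =>
    hfδ x hx y hy (hxy.trans hmesh)).trans_lt (half_lt_self hε)

theorem intervalIntegral.integral_comp_div_two_of_symm {f : ℝ → E} (hf : ∀ x, f (1 - x) = f x)
    (hint : IntervalIntegrable f volume 0 1) :
    ∫ x in (0 : ℝ)..1, f (x / 2) = ∫ x in (0 : ℝ)..1, f x := by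
  have hhalf : (1 / 2 : ℝ) ∈ Set.uIcc 0 1 := by rw [Set.uIcc_of_le zero_le_one]; norm_num
  have hright : ∫ x in (1 / 2 : ℝ)..1, f x = ∫ x in (0 : ℝ)..(1 / 2), f x := by
    have h := integral_comp_sub_left f (a := 0) (b := 1 / 2) 1
    simp only [hf] at h
    norm_num at h
    exact h.symm
  rw [integral_comp_div _ two_ne_zero, ← integral_add_adjacent_intervals
    (hint.mono_set (Set.uIcc_subset_uIcc_left hhalf))
    (hint.mono_set (Set.uIcc_subset_uIcc_right hhalf)), hright, two_smul]
  norm_num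

end

theorem nnDispersion_one_sub (ω₀ k : ℝ) : nnDispersion ω₀ (1 - k) = nnDispersion ω₀ k := by
  rw [nnDispersion, nnDispersion, mul_one_sub, Real.sin_pi_sub]

theorem nnDispersion_periodic (ω₀ : ℝ) : Function.Periodic (nnDispersion ω₀) 1 := by
  intro k
  rw [nnDispersion, nnDispersion, mul_add_one, Real.sin_add_pi, neg_sq]

theorem phononVelocity_one_sub (ω₀ k : ℝ) : phononVelocity ω₀ (1 - k) = -phononVelocity ω₀ k := by
  have h := deriv_comp_const_sub (f := nnDispersion ω₀) (a := 1) (x := k)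
  simp only [nnDispersion_one_sub] at h
  rw [phononVelocity, phononVelocity, h, neg_div, neg_neg]

theorem phononVelocity_periodic (ω₀ : ℝ) : Function.Periodic (phononVelocity ω₀) 1 := by
  intro k
  have h := deriv_comp_add_const (f := nnDispersion ω₀) (a := 1) (x := k)
  simp only [nnDispersion_periodic ω₀ _] at h
  rw [phononVelocity, phononVelocity, ← h]

theorem nnDispersion_pos {ω₀ : ℝ} (hω₀ : ω₀ ≠ 0) (k : ℝ) : 0 < nnDispersion ω₀ k :=
  Real.sqrt_pos.2 (by positivity)

theorem hasDerivAt_nnDispersion {ω₀ : ℝ} (hω₀ : ω₀ ≠ 0) (k : ℝ) :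
    HasDerivAt (nnDispersion ω₀) (2 * π * Real.sin (2 * π * k) / nnDispersion ω₀ k) k := by
  have hsin : HasDerivAt (fun k => Real.sin (π * k)) (Real.cos (π * k) * π) k := by
    simpa using ((hasDerivAt_id k).const_mul π).sin
  have hrad : HasDerivAt (fun k => ω₀ ^ 2 + 4 * Real.sin (π * k) ^ 2)
      (4 * π * Real.sin (2 * π * k)) k := by
    refine (((hsin.fun_pow 2).const_mul 4).const_add (ω₀ ^ 2)).congr_deriv ?_
    rw [mul_assoc 2, Real.sin_two_mul]
    push_cast
    ring
  refine (hrad.sqrt (by positivity)).congr_deriv ?_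
  rw [nnDispersion]
  ring

theorem phononVelocity_eq {ω₀ : ℝ} (hω₀ : ω₀ ≠ 0) (k : ℝ) :
    phononVelocity ω₀ k = Real.sin (2 * π * k) / nnDispersion ω₀ k := by
  have := (nnDispersion_pos hω₀ k).ne'
  rw [phononVelocity, (hasDerivAt_nnDispersion hω₀ k).deriv]
  field_simp

theorem phononVelocity_sq {ω₀ : ℝ} (hω₀ : ω₀ ≠ 0) (k : ℝ) :
    phononVelocity ω₀ k ^ 2 = Real.sin (2 * π * k) ^ 2 / (ω₀ ^ 2 + 4 * Real.sin (π * k) ^ 2) := by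
  rw [phononVelocity_eq hω₀, div_pow, nnDispersion, Real.sq_sqrt (by positivity)]

theorem continuous_phononVelocity {ω₀ : ℝ} (hω₀ : ω₀ ≠ 0) : Continuous (phononVelocity ω₀) := by
  rw [funext (phononVelocity_eq hω₀)]
  exact (by fun_prop : Continuous fun k => Real.sin (2 * π * k)).div
    (continuous_iff_continuousAt.2 fun k => (hasDerivAt_nnDispersion hω₀ k).continuousAt)
    fun k => (nnDispersion_pos hω₀ k).ne'

theorem kinetic_conductivity_limit_general (ω₀ γ : ℝ) (hω₀ : 0 < ω₀) :
    (∀ k : ℝ, phononVelocity ω₀ k = Real.sin (2 * π * k) / nnDispersion ω₀ k) ∧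
    Tendsto
      (fun L : ℕ => γ⁻¹ * ((L : ℝ)⁻¹ * ∑ p ∈ Lambda L, phononVelocity ω₀ ((p : ℝ) / L) ^ 2))
      atTop
      (nhds (γ⁻¹ * ∫ x in (0:ℝ)..1,
        Real.sin (π * x) ^ 2 / (ω₀ ^ 2 + 4 * Real.sin (π * x / 2) ^ 2))) := by
  have hperiodic : Function.Periodic (fun k => phononVelocity ω₀ k ^ 2) 1 := fun k => by
    simp only [phononVelocity_periodic ω₀ k]
  have hsymm (k : ℝ) : phononVelocity ω₀ (1 - k) ^ 2 = phononVelocity ω₀ k ^ 2 := by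
    rw [phononVelocity_one_sub, neg_sq]
  have hcont : Continuous fun k => phononVelocity ω₀ k ^ 2 :=
    (continuous_phononVelocity hω₀.ne').pow 2
  have hintegral : ∫ x in (0:ℝ)..1, Real.sin (π * x) ^ 2 / (ω₀ ^ 2 + 4 * Real.sin (π * x / 2) ^ 2)
      = ∫ x in (0:ℝ)..1, phononVelocity ω₀ x ^ 2 := by
    rw [← intervalIntegral.integral_comp_div_two_of_symm hsymm (hcont.intervalIntegrable 0 1)]
    refine intervalIntegral.integral_congr fun x _ => ?_
    rw [phononVelocity_sq hω₀.ne']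
    ring_nf
  refine ⟨phononVelocity_eq hω₀.ne', ?_⟩
  rw [hintegral]
  refine ((tendsto_riemannSum_integral hcont.continuousOn).const_mul γ⁻¹).congr fun L => ?_
  rw [smul_eq_mul, sum_Lambda_eq_sum_range hperiodic]

/-- For the nearest-neighbour chain, `v(k) = sin(2πk)/ω(k)`, and the
kinetic thermal conductivity `κ(L) = γ⁻¹ L⁻¹ Σ_{k∈Λ_L*} v(k)²` converges, as `L → ∞`, to
the conductivity `γ⁻¹ ∫₀¹ sin²(πx)/(ω₀² + 4 sin²(πx/2)) dx` of the self-consistent heat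
bath model. -/
theorem kinetic_conductivity_limit (ω₀ γ : ℝ) (hω₀ : 0 < ω₀) (hγ : 0 < γ) :
    (∀ k : ℝ, phononVelocity ω₀ k = Real.sin (2 * π * k) / nnDispersion ω₀ k) ∧
    Tendsto
      (fun L : ℕ => γ⁻¹ * ((L : ℝ)⁻¹ * ∑ p ∈ Lambda L, phononVelocity ω₀ ((p : ℝ) / L) ^ 2))
      atTop
      (nhds (γ⁻¹ * ∫ x in (0:ℝ)..1,
        Real.sin (π * x) ^ 2 / (ω₀ ^ 2 + 4 * Real.sin (π * x / 2) ^ 2))) :=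
  kinetic_conductivity_limit_general ω₀ γ hω₀
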